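/- Assume r = 10 and let e be a (−1)-class. Then e − K ∈ Q, while for every real t ≥ 0 with t ≠ 1 one has te − K ∉ Q̄. Consequently each (−1)-class spans a ray lying on the boundary of the cone Q̄ + ℝ_{≥0}·K: e belongs to Q̄ + ℝ_{≥0}·K but not to its topological interior. -/

import Mathlib

open scoped BigOperators

/-- The Minkowski intersection form of signature (1,r) on `ℝ^{r+1}`:
`⟨u,v⟩ = u₀v₀ − u₁v₁ − ⋯ − u_r v_r`. -/
noncomputable def mform (r : ℕ) (u v : Fin (r + 1) → ℝ) : ℝ :=
  u 0 * v 0 - ∑ i : Fin r, u i.succ * v i.succ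

/-- The class `L = (1,0,…,0)` of a line. -/
def lclass (r : ℕ) : Fin (r + 1) → ℝ := fun i => if i = 0 then 1 else 0

/-- The canonical class `K = (−3,1,…,1)`. -/
def kclass (r : ℕ) : Fin (r + 1) → ℝ := fun i => if i = 0 then -3 else 1

/-- `Q = {α : ⟨α,α⟩ ≥ 0, ⟨α,L⟩ > 0}`. -/
def Qset (r : ℕ) : Set (Fin (r + 1) → ℝ) :=
  {α | 0 ≤ mform r α α ∧ 0 < mform r α (lclass r)}

/-- `Q̄ = {α : ⟨α,α⟩ ≥ 0, ⟨α,L⟩ ≥ 0}`. -/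
def Qbar (r : ℕ) : Set (Fin (r + 1) → ℝ) :=
  {α | 0 ≤ mform r α α ∧ 0 ≤ mform r α (lclass r)}

/-
Since `e² = e·K = K² = -1`, the form on the span of `e` and `K` is
`(a • e - b • K)² = -(a - b)²`; so `e - K` is isotropic, with `⟨e - K, L⟩ = e₀ + 3 > 0`,
and `t • e - K` is negative for `t ≠ 1`. For the last claim, since `r ≥ 3` there is a
negative vector `v` orthogonal to `e` and `K`, and then
`(e + s • v - t • K)² = -(1 - t)² + s² v² < 0` for `s ≠ 0`: the points `e + s • v`,
which tend to `e`, all lie outside `Q̄ + ℝ≥0 K`.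
-/

open Filter Topology

def qbarAddRay (r : ℕ) (w : Fin (r + 1) → ℝ) : Set (Fin (r + 1) → ℝ) :=
  {x | ∃ q ∈ Qbar r, ∃ t : ℝ, 0 ≤ t ∧ x = q + t • w}

theorem notMem_interior_of_forall_add_smul_notMem {E : Type*} [AddCommGroup E]
    [TopologicalSpace E] [Module ℝ E] [ContinuousAdd E] [ContinuousSMul ℝ E] {S : Set E} {x v : E}
    (h : ∀ s : ℝ, s ≠ 0 → x + s • v ∉ S) : x ∉ interior S := by
  intro hx
  have hcont : Continuous fun s : ℝ => x + s • v := by fun_prop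
  have hlim : Tendsto (fun s : ℝ => x + s • v) (𝓝[≠] 0) (𝓝 x) := by
    simpa using (hcont.tendsto 0).mono_left nhdsWithin_le_nhds
  obtain ⟨s, hs, hs0⟩ :=
    ((hlim.eventually (mem_interior_iff_mem_nhds.1 hx)).and self_mem_nhdsWithin).exists
  exact h s hs0 hs

section mform

variable {r : ℕ}

theorem mform_comm (u v : Fin (r + 1) → ℝ) : mform r u v = mform r v u := by
  simp only [mform, mul_comm]

theorem mform_add_left (u w v : Fin (r + 1) → ℝ) :
    mform r (u + w) v = mform r u v + mform r w v := by
  simp only [mform, Pi.add_apply, add_mul, Finset.sum_add_distrib]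
  ring

theorem mform_sub_left (u w v : Fin (r + 1) → ℝ) :
    mform r (u - w) v = mform r u v - mform r w v := by
  simp only [mform, Pi.sub_apply, sub_mul, Finset.sum_sub_distrib]
  ring

theorem mform_smul_left (c : ℝ) (u v : Fin (r + 1) → ℝ) :
    mform r (c • u) v = c * mform r u v := by
  simp only [mform, Pi.smul_apply, smul_eq_mul, mul_assoc, ← Finset.mul_sum]
  ring

theorem mform_add_right (u w v : Fin (r + 1) → ℝ) :
    mform r v (u + w) = mform r v u + mform r v w := by
  rw [mform_comm, mform_add_left, mform_comm u, mform_comm w]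

theorem mform_sub_right (u w v : Fin (r + 1) → ℝ) :
    mform r v (u - w) = mform r v u - mform r v w := by
  rw [mform_comm, mform_sub_left, mform_comm u, mform_comm w]

theorem mform_smul_right (c : ℝ) (u v : Fin (r + 1) → ℝ) :
    mform r v (c • u) = c * mform r v u := by
  rw [mform_comm, mform_smul_left, mform_comm]

theorem mform_lclass (x : Fin (r + 1) → ℝ) : mform r x (lclass r) = x 0 := by
  simp [mform, lclass]

theorem mform_kclass_self : mform r (kclass r) (kclass r) = 9 - r := by
  simp [mform, kclass]
  norm_num

theorem mform_self_add_of_mform_eq_zero {x y : Fin (r + 1) → ℝ} (hxy : mform r x y = 0) :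
    mform r (x + y) (x + y) = mform r x x + mform r y y := by
  rw [mform_add_left, mform_add_right, mform_add_right, hxy, mform_comm y x, hxy]
  ring

theorem mform_self_smul_sub_smul {u w : Fin (r + 1) → ℝ} (huu : mform r u u = -1)
    (huw : mform r u w = -1) (hww : mform r w w = -1) (a b : ℝ) :
    mform r (a • u - b • w) (a • u - b • w) = -(a - b) ^ 2 := by
  simp only [mform_sub_left, mform_sub_right, mform_smul_left, mform_smul_right, huu, hww,
    huw, mform_comm w u]
  ring

theorem exists_mform_self_neg_of_mform_eq_zero (hr : 2 < r) (x y : Fin (r + 1) → ℝ) :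
    ∃ v, mform r x v = 0 ∧ mform r y v = 0 ∧ mform r v v < 0 := by
  -- `v = (0, g)` for a nontrivial linear relation `g` among `r > 2` vectors of `ℝ²`
  have hdep : ¬LinearIndependent ℝ (fun i : Fin r => ![x i.succ, y i.succ]) := fun h => by
    have := h.fintype_card_le_finrank
    simp only [Fintype.card_fin, Module.finrank_fin_fun] at this
    omega
  obtain ⟨g, hg, i, hi⟩ := Fintype.not_linearIndependent_iff.1 hdep
  have hx : ∑ j, x j.succ * g j = 0 := by
    simpa [mul_comm] using congrFun hg 0
  have hy : ∑ j, y j.succ * g j = 0 := by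
    simpa [mul_comm] using congrFun hg 1
  refine ⟨Fin.cons 0 g, by simp [mform, hx], by simp [mform, hy], ?_⟩
  have hpos : 0 < ∑ j, g j * g j :=
    Finset.sum_pos' (fun j _ => mul_self_nonneg (g j)) ⟨i, Finset.mem_univ i, mul_self_pos.2 hi⟩
  simpa [mform] using hpos

theorem notMem_interior_qbarAddRay (hr : 2 < r) {u w : Fin (r + 1) → ℝ}
    (huu : mform r u u = -1) (huw : mform r u w = -1) (hww : mform r w w = -1) :
    u ∉ interior (qbarAddRay r w) := by
  obtain ⟨v, huv, hwv, hvv⟩ := exists_mform_self_neg_of_mform_eq_zero hr u w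
  refine notMem_interior_of_forall_add_smul_notMem (v := v) fun s hs ⟨q, ⟨hq, _⟩, t, _, hut⟩ => ?_
  have hq_eq : q = ((1 : ℝ) • u - t • w) + s • v := by
    rw [one_smul, eq_sub_of_add_eq hut.symm]
    abel
  have horth : mform r ((1 : ℝ) • u - t • w) (s • v) = 0 := by
    simp only [mform_sub_left, mform_smul_left, mform_smul_right, huv, hwv, mul_zero, sub_zero]
  rw [hq_eq, mform_self_add_of_mform_eq_zero horth, mform_self_smul_sub_smul huu huw hww,
    mform_smul_left, mform_smul_right] at hq
  nlinarith [sq_nonneg (1 - t), mul_pos (mul_self_pos.2 hs) (neg_pos.2 hvv)]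

end mform

theorem stmt9 (r : ℕ) (hr : r = 10) (e : Fin (r + 1) → ℝ)
    (hee : mform r e e = -1) (heK : mform r e (kclass r) = -1)
    (heL : 0 ≤ mform r e (lclass r)) :
    (e - kclass r ∈ Qset r) ∧
    (∀ t : ℝ, 0 ≤ t → t ≠ 1 → t • e - kclass r ∉ Qbar r) ∧
    (e ∈ {x : Fin (r + 1) → ℝ | ∃ q ∈ Qbar r, ∃ t : ℝ, 0 ≤ t ∧ x = q + t • kclass r}) ∧
    (e ∉ interior {x : Fin (r + 1) → ℝ | ∃ q ∈ Qbar r, ∃ t : ℝ, 0 ≤ t ∧ x = q + t • kclass r}) := by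
  have hKK : mform r (kclass r) (kclass r) = -1 := by
    rw [mform_kclass_self, hr]
    norm_num
  have hsq (a b : ℝ) := mform_self_smul_sub_smul hee heK hKK a b
  have hQ : e - kclass r ∈ Qset r := by
    refine ⟨by simpa using (hsq 1 1).ge, ?_⟩
    rw [mform_lclass] at heL
    rw [mform_sub_left, mform_lclass, mform_lclass, show kclass r 0 = -3 from rfl]
    linarith
  refine ⟨hQ, fun t _ ht ⟨hq, _⟩ => ?_, ⟨e - kclass r, ⟨hQ.1, hQ.2.le⟩, 1, zero_le_one, by simp⟩,
    notMem_interior_qbarAddRay (by omega) hee heK hKK⟩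
  rw [← one_smul ℝ (kclass r), hsq] at hq
  nlinarith [sq_pos_of_ne_zero (sub_ne_zero.2 ht)]
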